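/- Let N ~ NB(m, p) with p ∈ (0,1), and let R ≥ 2 be an integer. Set ρ_N = max_{1≤k≤R−1} p/|1 − (1−p)e^{2πik/R}|. Then ρ_N < 1 and for every residue r ∈ {0,...,R−1}, |P(N mod R = r) − 1/R| ≤ ((R−1)/R) ρ_N^m. In particular P(N mod R = r) → 1/R as m → ∞. -/

import Mathlib

open Real Filter

/-- PMF of the negative binomial distribution `NB(m, p)` (trials to the `m`-th success). -/
noncomputable def nbPmf (m : ℕ) (p : ℝ) (k : ℕ) : ℝ :=
  if m ≤ k then (Nat.choose (k - 1) (m - 1) : ℝ) * p ^ m * (1 - p) ^ (k - m) else 0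

lemma nb_hasSum (p : ℝ) (hp0 : 0 < p) (hp1 : p < 1) (m : ℕ) (hm : 1 ≤ m) (z : ℂ)
    (hz : ‖z‖ = 1) :
    HasSum (fun k : ℕ => (nbPmf m p k : ℂ) * z ^ k)
      (((p : ℂ) * z) ^ m / (1 - (1 - (p : ℂ)) * z) ^ m) := by
  have hq : ‖(1 - (p : ℂ)) * z‖ < 1 := by
    rw [norm_mul, show (1 - (p:ℂ)) = ((1 - p : ℝ) : ℂ) by push_cast; ring,
      Complex.norm_real, hz, mul_one, Real.norm_eq_abs,
      abs_of_pos (by linarith)]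
    linarith
  have h0 := hasSum_choose_mul_geometric_of_norm_lt_one (m - 1) hq
  have h1 := h0.mul_left (((p : ℂ) * z) ^ m)
  have h2 : (fun n : ℕ => ((p:ℂ)*z)^m * ((n + (m-1)).choose (m-1) * ((1 - (p:ℂ)) * z) ^ n))
      = fun n : ℕ => (nbPmf m p (n + m) : ℂ) * z ^ (n + m) := by
    funext n
    have h3 : m ≤ n + m := le_add_self
    have h4 : (n + m) - 1 = n + (m - 1) := by omega
    have h5 : (n + m) - m = n := by omega
    simp only [nbPmf, if_pos h3, h4, h5, mul_pow, pow_add]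
    push_cast
    ring
  rw [h2] at h1
  have h6 := (hasSum_nat_add_iff (f := fun k : ℕ => (nbPmf m p k : ℂ) * z ^ k) m).mp h1
  have h7 : ∑ i ∈ Finset.range m, (nbPmf m p i : ℂ) * z ^ i = 0 := by
    apply Finset.sum_eq_zero
    intro i hi
    simp only [Finset.mem_range] at hi
    simp [nbPmf, Nat.not_le.mpr hi]
  rw [h7, add_zero] at h6
  rw [Nat.sub_add_cancel hm, mul_one_div] at h6
  exact h6

/-- **Synchronous convergence of the permutation count.** For `N ~ NB(m,p)` with
`p ∈ (0,1)` and `R ≥ 2`, with `ρ_N = max_{1≤k≤R-1} p/|1-(1-p)e^{2πik/R}|` one has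
`ρ_N < 1`, every residue probability of `N mod R` is within `((R-1)/R)·ρ_N^m` of `1/R`,
and hence `P(N mod R = r) → 1/R` as `m → ∞`. -/
theorem stmt_10 (p : ℝ) (hp0 : 0 < p) (hp1 : p < 1) (R : ℕ) (hR : 2 ≤ R)
    (ρN : ℝ)
    (hρN : ρN = (Finset.Ico 1 R).sup' (Finset.nonempty_Ico.mpr (by omega))
      (fun k => p / ‖
        (1 - (1 - (p : ℂ)) * Complex.exp ((2 * π * k / R : ℝ) * Complex.I))‖)) :
    ρN < 1 ∧
    (∀ m : ℕ, 1 ≤ m → ∀ r : ℕ, r < R →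
      |(∑' k : ℕ, if k % R = r then nbPmf m p k else 0) - 1 / R|
        ≤ ((R : ℝ) - 1) / R * ρN ^ m) ∧
    (∀ r : ℕ, r < R →
      Tendsto (fun m : ℕ => ∑' k : ℕ, if k % R = r then nbPmf m p k else 0)
        atTop (nhds (1 / R))) := by
  have hRne : (R : ℂ) ≠ 0 := Nat.cast_ne_zero.mpr (by omega)
  set w : ℂ := Complex.exp (2 * π * Complex.I / R) with hw
  have hprim : IsPrimitiveRoot w R := Complex.isPrimitiveRoot_exp R (by omega)
  have hwpow : ∀ j : ℕ, Complex.exp (((2 * π * j / R : ℝ)) * Complex.I) = w ^ j := by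
    intro j
    rw [hw, ← Complex.exp_nat_mul]
    congr 1
    push_cast
    ring
  have hw1 : ‖w‖ = 1 := by
    rw [hw, show (2 * π * Complex.I / R : ℂ) = ((2 * π / R : ℝ) : ℂ) * Complex.I by
      push_cast; ring, Complex.norm_exp_ofReal_mul_I]
  have habsw : ∀ j : ℕ, ‖w ^ j‖ = 1 := by
    intro j; rw [norm_pow, hw1, one_pow]
  have hwne : w ≠ 0 := Complex.exp_ne_zero _
  have hwmod : ∀ k : ℕ, w ^ (k % R) = w ^ k := by
    intro k
    conv_rhs => rw [← Nat.div_add_mod k R]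
    rw [pow_add, pow_mul, hprim.pow_eq_one, one_pow, one_mul]
  -- Part 1 : ρN < 1
  have hρlt : ρN < 1 := by
    rw [hρN]
    rw [Finset.sup'_lt_iff]
    intro k hk
    rw [Finset.mem_Ico] at hk
    rw [hwpow k]
    set z := w ^ k with hzdef
    have hz1 : ‖z‖ = 1 := habsw k
    have hzne : z ≠ 1 := hprim.pow_ne_one_of_pos_of_lt (by omega) (by omega)
    have hsq : z.re ^ 2 + z.im ^ 2 = 1 := by
      have h := Complex.sq_norm z
      rw [hz1, Complex.normSq_apply] at h
      nlinarith [h]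
    have hre : z.re < 1 := by
      rcases lt_or_eq_of_le (Complex.re_le_norm z) with h | h
      · rwa [hz1] at h
      · exfalso
        apply hzne
        rw [hz1] at h
        have him : z.im = 0 := by nlinarith [hsq]
        apply Complex.ext <;> simp [← h, him]
    have hnormsq : p ^ 2 < Complex.normSq (1 - (1 - (p:ℂ)) * z) := by
      have hrw : (1 : ℂ) - (1 - (p:ℂ)) * z = Complex.mk (1 - (1 - p) * z.re) (-((1 - p) * z.im)) := by
        apply Complex.ext <;>
          simp [Complex.sub_re, Complex.sub_im, Complex.mul_re, Complex.mul_im]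
      rw [hrw, Complex.normSq_mk]
      nlinarith [mul_pos (by linarith : (0:ℝ) < 1 - p) (by linarith : (0:ℝ) < 1 - z.re), hsq]
    have habspos : 0 < ‖(1 - (1 - (p:ℂ)) * z)‖ := by
      rw [Complex.norm_def]
      exact Real.sqrt_pos.mpr (lt_trans (by positivity) hnormsq)
    rw [div_lt_one habspos]
    apply lt_of_pow_lt_pow_left₀ 2 (norm_nonneg _)
    rwa [Complex.sq_norm]
  have hρ0 : 0 ≤ ρN := by
    rw [hρN]
    have h1R : (1 : ℕ) ∈ Finset.Ico 1 R := Finset.mem_Ico.mpr ⟨le_refl _, by omega⟩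
    refine le_trans ?_ (Finset.le_sup' _ h1R)
    positivity
  -- Part 2 : the main bound
  have hmain : ∀ m : ℕ, 1 ≤ m → ∀ r : ℕ, r < R →
      |(∑' k : ℕ, if k % R = r then nbPmf m p k else 0) - 1 / R|
        ≤ ((R : ℝ) - 1) / R * ρN ^ m := by
    intro m hm r hr
    set φ : ℕ → ℂ := fun j => ((p : ℂ) * w ^ j) ^ m / (1 - (1 - (p : ℂ)) * w ^ j) ^ m with hφdef
    set c : ℕ → ℂ := fun j => (1 / (R : ℂ)) * ((w ^ j) ^ r)⁻¹ with hcdef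
    have hφ : ∀ j : ℕ, HasSum (fun k : ℕ => (nbPmf m p k : ℂ) * (w ^ j) ^ k) (φ j) :=
      fun j => nb_hasSum p hp0 hp1 m hm _ (habsw j)
    have hind : ∀ k : ℕ, ((if k % R = r then nbPmf m p k else 0 : ℝ) : ℂ)
        = ∑ j ∈ Finset.range R, c j * ((nbPmf m p k : ℂ) * (w ^ j) ^ k) := by
      intro k
      have hrwsum : ∑ j ∈ Finset.range R, c j * ((nbPmf m p k : ℂ) * (w ^ j) ^ k)
          = (nbPmf m p k : ℂ) * ((1 / (R:ℂ)) * ∑ j ∈ Finset.range R, (w ^ k * (w ^ r)⁻¹) ^ j) := by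
        rw [Finset.mul_sum, Finset.mul_sum]
        apply Finset.sum_congr rfl
        intro j _
        have e1 : (w ^ j) ^ k = (w ^ k) ^ j := by rw [← pow_mul, ← pow_mul, mul_comm]
        have e2 : ((w ^ j) ^ r)⁻¹ = ((w ^ r)⁻¹) ^ j := by
          rw [← pow_mul, mul_comm, pow_mul, inv_pow]
        rw [hcdef]
        simp only
        rw [e1, e2, mul_pow]
        ring
      rw [hrwsum]
      set u := w ^ k * (w ^ r)⁻¹ with hudef
      have hur : u ^ R = 1 := by
        rw [hudef, mul_pow, inv_pow, ← pow_mul, ← pow_mul, mul_comm k R, mul_comm r R,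
          pow_mul, pow_mul, hprim.pow_eq_one, one_pow, one_pow, inv_one, mul_one]
      by_cases hkr : k % R = r
      · have hu1 : u = 1 := by
          rw [hudef, ← hwmod k, hkr, mul_inv_cancel₀ (pow_ne_zero _ hwne)]
        rw [if_pos hkr, hu1]
        simp only [one_pow, Finset.sum_const, Finset.card_range, nsmul_eq_mul, mul_one]
        rw [one_div, inv_mul_cancel₀ hRne, mul_one]
      · have hu1 : u ≠ 1 := by
          intro h
          apply hkr
          have hk' : w ^ k = w ^ r := by
            rwa [hudef, mul_inv_eq_one₀ (pow_ne_zero _ hwne)] at h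
          exact hprim.pow_inj (Nat.mod_lt _ (by omega)) hr (by rw [hwmod k, hk'])
        have hsum0 : ∑ j ∈ Finset.range R, u ^ j = 0 := by
          rw [geom_sum_eq hu1, hur]
          simp
        rw [if_neg hkr, hsum0]
        simp
    have hbig : HasSum (fun k : ℕ => ((if k % R = r then nbPmf m p k else 0 : ℝ) : ℂ))
        (∑ j ∈ Finset.range R, c j * φ j) := by
      have h1 : HasSum (fun k : ℕ => ∑ j ∈ Finset.range R, c j * ((nbPmf m p k : ℂ) * (w ^ j) ^ k))
          (∑ j ∈ Finset.range R, c j * φ j) :=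
        hasSum_sum fun j _ => (hφ j).mul_left (c j)
      rw [show (fun k : ℕ => ((if k % R = r then nbPmf m p k else 0 : ℝ) : ℂ))
        = fun k : ℕ => ∑ j ∈ Finset.range R, c j * ((nbPmf m p k : ℂ) * (w ^ j) ^ k)
        from funext hind]
      exact h1
    have hS : ((∑' k : ℕ, if k % R = r then nbPmf m p k else 0 : ℝ) : ℂ)
        = ∑ j ∈ Finset.range R, c j * φ j := by
      rw [Complex.ofReal_tsum]
      exact hbig.tsum_eq
    have hpne : (p : ℂ) ≠ 0 := by
      simp only [ne_eq, Complex.ofReal_eq_zero]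
      exact hp0.ne'
    have h0term : c 0 * φ 0 = 1 / (R : ℂ) := by
      rw [hcdef, hφdef]
      simp only [pow_zero, one_pow, inv_one, mul_one]
      rw [show (1:ℂ) - (1 - (p:ℂ)) = (p:ℂ) by ring, div_self (pow_ne_zero _ hpne), mul_one]
    have hsplit : ∑ j ∈ Finset.range R, c j * φ j
        = 1 / (R : ℂ) + ∑ j ∈ Finset.Ico 1 R, c j * φ j := by
      rw [Finset.range_eq_Ico, Finset.sum_eq_sum_Ico_succ_bot (by omega : 0 < R), h0term]
    have habsφ : ∀ j ∈ Finset.Ico 1 R, ‖c j * φ j‖ ≤ (1 / R) * ρN ^ m := by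
      intro j hj
      rw [norm_mul]
      have hc : ‖c j‖ = 1 / R := by
        rw [hcdef]
        simp only
        rw [norm_mul, norm_inv, norm_pow, habsw j, one_pow, inv_one, mul_one, norm_div,
          norm_one, Complex.norm_natCast]
      have hφj : ‖φ j‖ ≤ ρN ^ m := by
        have habs1 : ‖φ j‖ = (p / ‖1 - (1 - (p:ℂ)) * w ^ j‖) ^ m := by
          rw [hφdef]
          simp only
          rw [norm_div, norm_pow, norm_pow, norm_mul, habsw j, mul_one, Complex.norm_real,
            Real.norm_eq_abs, abs_of_pos hp0, div_pow]
        rw [habs1]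
        apply pow_le_pow_left₀ (by positivity)
        rw [hρN]
        have hle := Finset.le_sup' (f := fun k : ℕ => p / ‖
          (1 - (1 - (p : ℂ)) * Complex.exp ((2 * π * k / R : ℝ) * Complex.I))‖) hj
        rw [hwpow j] at hle
        exact hle
      rw [hc]
      exact mul_le_mul_of_nonneg_left hφj (by positivity)
    have heq : |(∑' k : ℕ, if k % R = r then nbPmf m p k else 0) - 1 / R|
        = ‖∑ j ∈ Finset.Ico 1 R, c j * φ j‖ := by
      rw [← Real.norm_eq_abs, ← Complex.norm_real]
      congr 1
      rw [Complex.ofReal_sub, hS, hsplit]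
      push_cast
      ring
    rw [heq]
    calc ‖∑ j ∈ Finset.Ico 1 R, c j * φ j‖
        ≤ ∑ j ∈ Finset.Ico 1 R, ‖c j * φ j‖ :=
          norm_sum_le _ _
      _ ≤ ∑ _j ∈ Finset.Ico 1 R, (1 / R) * ρN ^ m := Finset.sum_le_sum habsφ
      _ = ((R : ℝ) - 1) / R * ρN ^ m := by
          rw [Finset.sum_const, Nat.card_Ico, nsmul_eq_mul]
          rw [Nat.cast_sub (by omega), Nat.cast_one]
          ring
  refine ⟨hρlt, hmain, ?_⟩
  -- Part 3 : convergence
  intro r hr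
  have h1 : Tendsto (fun m : ℕ => ((R : ℝ) - 1) / R * ρN ^ m) atTop (nhds 0) := by
    have h2 := tendsto_pow_atTop_nhds_zero_of_lt_one hρ0 hρlt
    simpa using h2.const_mul (((R : ℝ) - 1) / R)
  rw [← tendsto_sub_nhds_zero_iff]
  apply squeeze_zero_norm' ?_ h1
  filter_upwards [eventually_ge_atTop 1] with m hm
  simpa [Real.norm_eq_abs] using hmain m hm r hr
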